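/- Let ν ≥ 2 and d ≥ 1, let q₁, …, q_{ν−1} be distinct real numbers, and for ϑ = (ϑ₁,…,ϑ_d) ∈ ℝ^d define the ν×ν real symmetric matrix H(ϑ) with H(ϑ)_{jj} = 1 + q_j for j ∈ {1,…,ν−1}, H(ϑ)_{νν} = ν − 1 + 2∑_{s=1}^{d} (1 − cos ϑ_s), H(ϑ)_{jν} = H(ϑ)_{νj} = −1 for j ∈ {1,…,ν−1}, and all other entries 0. Then there is no real number λ such that λ is an eigenvalue of H(ϑ) for every ϑ ∈ ℝ^d. -/
import Mathlib


open Matrix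

/-- The Floquet fiber matrix of the Schrödinger operator on the lattice `ℤ^d`
decorated with `ν − 1` pendant vertices carrying potential values `q`. -/
noncomputable def pendantFiberQ (ν d : ℕ) (q : Fin (ν - 1) → ℝ) (ϑ : Fin d → ℝ) :
    Matrix (Fin ν) (Fin ν) ℝ :=
  fun j k =>
    if j = k then
      (if h : (j : ℕ) < ν - 1 then 1 + q ⟨j, h⟩
       else (ν : ℝ) - 1 + 2 * ∑ s : Fin d, (1 - Real.cos (ϑ s)))
    else if (j : ℕ) = ν - 1 ∨ (k : ℕ) = ν - 1 then -1 else 0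

section Aux

variable {ν d : ℕ}

/-- Row `j < ν - 1` of the shifted fiber matrix applied to `v`. -/
lemma pendant_row (hν : 2 ≤ ν) (q : Fin (ν - 1) → ℝ) (lam : ℝ) (ϑ : Fin d → ℝ)
    (v : Fin ν → ℝ) (j : Fin (ν - 1)) :
    ((pendantFiberQ ν d q ϑ - lam • (1 : Matrix (Fin ν) (Fin ν) ℝ)) *ᵥ v)
      (Fin.castLE (Nat.sub_le ν 1) j)
      = (1 + q j - lam) * v (Fin.castLE (Nat.sub_le ν 1) j) - v ⟨ν - 1, by omega⟩ := by
  classical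
  set ej : Fin ν := Fin.castLE (Nat.sub_le ν 1) j with hej
  set L : Fin ν := ⟨ν - 1, by omega⟩ with hLdef
  have hjv : (ej : ℕ) = (j : ℕ) := rfl
  have hjlt : (ej : ℕ) < ν - 1 := j.2
  have hejL : ej ≠ L := by
    intro h
    have : (ej : ℕ) = ν - 1 := by rw [h]
    omega
  have key : ∀ k : Fin ν,
      (pendantFiberQ ν d q ϑ - lam • (1 : Matrix (Fin ν) (Fin ν) ℝ)) ej k * v k
      = (if k = ej then (1 + q j - lam) * v k else 0)
        + (if k = L then -v k else 0) := by
    intro k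
    by_cases h1 : k = ej
    · subst h1
      have hne : ¬ (ej = L) := hejL
      simp only [pendantFiberQ, Matrix.sub_apply, Matrix.smul_apply, Matrix.one_apply,
        if_pos rfl, if_neg hne, dif_pos hjlt, smul_eq_mul, mul_one, if_true, eq_self_iff_true]
      have hq' : q ⟨(ej : ℕ), hjlt⟩ = q j := rfl
      try rw [hq']
      try ring
    · have h1' : ¬ (ej = k) := fun h => h1 h.symm
      by_cases h2 : k = L
      · subst h2
        have hkv : (L : ℕ) = ν - 1 := rfl
        have hor : ((ej : ℕ) = ν - 1 ∨ (L : ℕ) = ν - 1) := Or.inr hkv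
        simp only [pendantFiberQ, Matrix.sub_apply, Matrix.smul_apply, Matrix.one_apply,
          if_neg h1', if_neg h1, if_pos rfl, if_pos hor, smul_eq_mul, if_true,
          true_or, or_true, eq_self_iff_true]
        try ring
      · have hkv : (k : ℕ) ≠ ν - 1 := by
          intro h
          exact h2 (Fin.ext h)
        have hor : ¬ ((ej : ℕ) = ν - 1 ∨ (k : ℕ) = ν - 1) := by
          push_neg
          exact ⟨by omega, hkv⟩
        simp only [pendantFiberQ, Matrix.sub_apply, Matrix.smul_apply, Matrix.one_apply,
          if_neg h1', if_neg h1, if_neg h2, if_neg hor, smul_eq_mul, mul_zero, sub_zero,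
          zero_mul]
        ring
  show ∑ k : Fin ν, (pendantFiberQ ν d q ϑ - lam • (1 : Matrix (Fin ν) (Fin ν) ℝ)) ej k * v k
      = (1 + q j - lam) * v ej - v L
  rw [Finset.sum_congr rfl fun k _ => key k, Finset.sum_add_distrib,
    Finset.sum_ite_eq' Finset.univ ej (fun k => (1 + q j - lam) * v k),
    Finset.sum_ite_eq' Finset.univ L (fun k => -v k)]
  simp only [Finset.mem_univ, if_pos]
  ring

/-- The last row of the shifted fiber matrix applied to `v`. -/
lemma pendant_rowL (hν : 2 ≤ ν) (q : Fin (ν - 1) → ℝ) (lam : ℝ) (ϑ : Fin d → ℝ)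
    (v : Fin ν → ℝ) :
    ((pendantFiberQ ν d q ϑ - lam • (1 : Matrix (Fin ν) (Fin ν) ℝ)) *ᵥ v)
      ⟨ν - 1, by omega⟩
      = ((ν : ℝ) - 1 + 2 * ∑ s : Fin d, (1 - Real.cos (ϑ s)) - lam + 1) * v ⟨ν - 1, by omega⟩
        - ∑ k : Fin ν, v k := by
  classical
  set L : Fin ν := ⟨ν - 1, by omega⟩ with hLdef
  set a : ℝ := (ν : ℝ) - 1 + 2 * ∑ s : Fin d, (1 - Real.cos (ϑ s)) with ha
  have hLv : (L : ℕ) = ν - 1 := rfl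
  have hnlt : ¬ ((L : ℕ) < ν - 1) := by omega
  have key : ∀ k : Fin ν,
      (pendantFiberQ ν d q ϑ - lam • (1 : Matrix (Fin ν) (Fin ν) ℝ)) L k * v k
      = -v k + (if k = L then (a - lam + 1) * v k else 0) := by
    intro k
    by_cases h1 : k = L
    · subst h1
      simp only [pendantFiberQ, Matrix.sub_apply, Matrix.smul_apply, Matrix.one_apply,
        if_pos rfl, dif_neg hnlt, smul_eq_mul, mul_one, if_true, eq_self_iff_true]
      ring
    · have h1' : ¬ (L = k) := fun h => h1 h.symm
      have hor : ((L : ℕ) = ν - 1 ∨ (k : ℕ) = ν - 1) := Or.inl hLv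
      simp only [pendantFiberQ, Matrix.sub_apply, Matrix.smul_apply, Matrix.one_apply,
        if_neg h1', if_neg h1, if_pos hor, smul_eq_mul, mul_zero, sub_zero, if_true,
        true_or, or_true]
      ring
  show ∑ k : Fin ν, (pendantFiberQ ν d q ϑ - lam • (1 : Matrix (Fin ν) (Fin ν) ℝ)) L k * v k
      = (a - lam + 1) * v L - ∑ k : Fin ν, v k
  rw [Finset.sum_congr rfl fun k _ => key k, Finset.sum_add_distrib,
    Finset.sum_ite_eq' Finset.univ L (fun k => (a - lam + 1) * v k)]
  simp only [Finset.mem_univ, if_pos, Finset.sum_neg_distrib]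
  ring

end Aux

/-- if the potential values `q₁, …, q_{ν−1}` are distinct, the Schrödinger
operator on the decorated lattice has no flat band: no real `lam` is an eigenvalue of
`H(ϑ)` for every `ϑ`. -/
theorem pendant_no_flat_band (ν d : ℕ) (hν : 2 ≤ ν) (hd : 1 ≤ d)
    (q : Fin (ν - 1) → ℝ) (hq : Function.Injective q) :
    ¬ ∃ lam : ℝ, ∀ ϑ : Fin d → ℝ,
        (pendantFiberQ ν d q ϑ - lam • (1 : Matrix (Fin ν) (Fin ν) ℝ)).det = 0 := by
  classical
  rintro ⟨lam, hlam⟩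
  set L : Fin ν := ⟨ν - 1, by omega⟩ with hLdef
  set e : Fin (ν - 1) → Fin ν := Fin.castLE (Nat.sub_le ν 1) with hedef
  have hker : ∀ ϑ : Fin d → ℝ, ∃ v : Fin ν → ℝ, v ≠ 0 ∧
      (pendantFiberQ ν d q ϑ - lam • (1 : Matrix (Fin ν) (Fin ν) ℝ)) *ᵥ v = 0 := by
    intro ϑ
    obtain ⟨v, hv0, hv⟩ := (Matrix.exists_mulVec_eq_zero_iff).mpr (hlam ϑ)
    exact ⟨v, hv0, hv⟩
  by_cases hA : ∃ j0 : Fin (ν - 1), 1 + q j0 = lam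
  · -- Case A: lam hits one of the pendant values; contradiction at ϑ = 0.
    obtain ⟨j0, hj0⟩ := hA
    obtain ⟨v, hv0, hv⟩ := hker 0
    have hrow : ∀ j : Fin (ν - 1), (1 + q j - lam) * v (e j) - v L = 0 := by
      intro j
      have := congrFun hv (e j)
      rw [pendant_row hν q lam 0 v j] at this
      simpa using this
    have hvL : v L = 0 := by
      have := hrow j0
      rw [hj0] at this
      simpa using this
    have hvj : ∀ j : Fin (ν - 1), j ≠ j0 → v (e j) = 0 := by
      intro j hj
      have h1 : (1 + q j - lam) ≠ 0 := by
        intro h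
        apply hj
        apply hq
        have : q j = q j0 := by
          have : (1 : ℝ) + q j = 1 + q j0 := by rw [hj0]; linarith
          linarith
        exact this
      have h0 := hrow j
      rw [hvL] at h0
      have h3 : (1 + q j - lam) * v (e j) = 0 := by linarith
      rcases mul_eq_zero.mp h3 with h | h
      · exact absurd h h1
      · exact h
    have hsum : ∑ k : Fin ν, v k = 0 := by
      have := congrFun hv L
      rw [pendant_rowL hν q lam 0 v] at this
      simp only [Pi.zero_apply] at this
      have hLL : v L = 0 := hvL
      rw [hLL] at this
      linarith [this]
    have hcast : ∀ k : Fin ν, k ≠ e j0 → v k = 0 := by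
      intro k hk
      by_cases hkL : k = L
      · rw [hkL]; exact hvL
      · have hklt : (k : ℕ) < ν - 1 := by
          have : (k : ℕ) ≠ ν - 1 := fun h => hkL (Fin.ext h)
          have := k.2
          omega
        have hkeq : k = e ⟨(k : ℕ), hklt⟩ := Fin.ext rfl
        have hne : (⟨(k : ℕ), hklt⟩ : Fin (ν - 1)) ≠ j0 := by
          intro h
          apply hk
          rw [hkeq, h]
        rw [hkeq]
        exact hvj _ hne
    have hvj0 : v (e j0) = 0 := by
      rw [Finset.sum_eq_single (e j0)] at hsum
      · exact hsum
      · intro k _ hk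
        exact hcast k hk
      · intro h
        exact absurd (Finset.mem_univ _) h
    apply hv0
    funext k
    by_cases hk : k = e j0
    · rw [hk]; exact hvj0
    · exact hcast k hk
  · -- Case B: lam avoids all pendant values.
    push_neg at hA
    have hAne : ∀ j : Fin (ν - 1), (1 + q j - lam) ≠ 0 := by
      intro j h
      exact hA j (by linarith)
    set c : Fin ν → ℝ := fun k =>
      if h : (k : ℕ) < ν - 1 then (1 + q ⟨(k : ℕ), h⟩ - lam)⁻¹ else 1 with hcdef
    have main : ∀ ϑ : Fin d → ℝ,
        (ν : ℝ) - 1 + 2 * ∑ s : Fin d, (1 - Real.cos (ϑ s)) - lam + 1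
          = ∑ k : Fin ν, c k := by
      intro ϑ
      obtain ⟨v, hv0, hv⟩ := hker ϑ
      have hrow : ∀ j : Fin (ν - 1), (1 + q j - lam) * v (e j) - v L = 0 := by
        intro j
        have := congrFun hv (e j)
        rw [pendant_row hν q lam ϑ v j] at this
        simpa using this
      have hvL : v L ≠ 0 := by
        intro hL0
        apply hv0
        funext k
        by_cases hkL : k = L
        · rw [hkL]; exact hL0
        · have hklt : (k : ℕ) < ν - 1 := by
            have : (k : ℕ) ≠ ν - 1 := fun h => hkL (Fin.ext h)
            have := k.2
            omega
          have hkeq : k = e ⟨(k : ℕ), hklt⟩ := Fin.ext rfl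
          have := hrow ⟨(k : ℕ), hklt⟩
          rw [hL0] at this
          have h2 : (1 + q ⟨(k : ℕ), hklt⟩ - lam) * v (e ⟨(k : ℕ), hklt⟩) = 0 := by
            linarith
          rcases mul_eq_zero.mp h2 with h | h
          · exact absurd h (hAne _)
          · rw [congrArg v hkeq]; exact h
      have hvk : ∀ k : Fin ν, v k = c k * v L := by
        intro k
        by_cases hklt : (k : ℕ) < ν - 1
        · have hkeq : k = e ⟨(k : ℕ), hklt⟩ := Fin.ext rfl
          have := hrow ⟨(k : ℕ), hklt⟩
          have h2 : (1 + q ⟨(k : ℕ), hklt⟩ - lam) * v k = v L := by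
            rw [congrArg v hkeq]; linarith
          have hc : c k = (1 + q ⟨(k : ℕ), hklt⟩ - lam)⁻¹ := by
            rw [hcdef]; exact dif_pos hklt
          rw [hc, ← h2, inv_mul_cancel_left₀ (hAne _)]
        · have hkL : k = L := by
            have h1 := k.2
            have h2 : (L : ℕ) = ν - 1 := rfl
            exact Fin.ext (by omega)
          have hc : c k = 1 := by
            rw [hcdef]; exact dif_neg hklt
          rw [hc, one_mul, hkL]
      have hsum : ∑ k : Fin ν, v k = (∑ k : Fin ν, c k) * v L := by
        rw [Finset.sum_congr rfl fun k _ => hvk k, ← Finset.sum_mul]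
      have hlast := congrFun hv L
      rw [pendant_rowL hν q lam ϑ v] at hlast
      simp only [Pi.zero_apply] at hlast
      have : ((ν : ℝ) - 1 + 2 * ∑ s : Fin d, (1 - Real.cos (ϑ s)) - lam + 1) * v L
          = (∑ k : Fin ν, c k) * v L := by
        rw [← hsum]; linarith
      exact mul_right_cancel₀ hvL this
    have h0 := main 0
    have hπ := main (fun _ => Real.pi)
    have hs0 : ∑ s : Fin d, ((1 : ℝ) - Real.cos ((0 : Fin d → ℝ) s)) = 0 := by
      simp
    have hsπ : ∑ s : Fin d, ((1 : ℝ) - Real.cos ((fun _ : Fin d => Real.pi) s)) = 2 * d := by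
      simp [Real.cos_pi]
      ring
    rw [hs0] at h0
    rw [hsπ] at hπ
    have : (4 : ℝ) * d = 0 := by linarith
    have hd' : (0:ℝ) < d := by exact_mod_cast hd
    nlinarith
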